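/- arXiv:2309.11150 — 3 statements merged into one kernel-verified Lean document; each statement's English description precedes it below -/
import Mathlib

section
/- For a standard Poisson process N with compensated process L_t = N_t - t, and f ∈ L²([0,T]), the random variable (∫₀^T f(t) dL_t)² is square integrable if and only if f ∈ L⁴([0,T]). -/
/-!
For a real random variable `X` put `D_X(c) = E[(1 - cos cX)²]`. Since `(1 - cos x)² ≤ x⁴/4` and
`n⁴ (1 - cos (x/n))² → x⁴/4`, Fatou's lemma shows that `X⁴` is integrable iff `D_X(c) = O(c⁴)` as
`c → 0`; the same holds for `f` on `(0,T]` with Lebesgue measure. The identity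
`2 (1 - cos x)² = (cos 2x - 1) - 4 (cos x - 1)` expresses `2 D_S(c)` as
`Re (exp ψ(2c) - 1) - 4 Re (exp ψ(c) - 1)` and `2 D_f(c)` as `Re ψ(2c) - 4 Re ψ(c)`, where
`ψ(c) = ∫ (e^{icf} - 1 - icf)` is the exponent of the characteristic function of `S`.
Since `ψ(c) = O(c²)`, `exp ψ - 1 - ψ = O(c⁴)`, hence `D_S - D_f = O(c⁴)` and the two fourth
moments are finite together.
-/

open MeasureTheory Filter Set Asymptotics Topology

namespace Real

lemma one_sub_cos_sq_le (x : ℝ) : (1 - cos x) ^ 2 ≤ x ^ 4 / 4 :=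
  calc (1 - cos x) ^ 2 ≤ (x ^ 2 / 2) ^ 2 := pow_le_pow_left₀ (sub_nonneg.2 (cos_le_one x))
        (by linarith [one_sub_sq_div_two_le_cos (x := x)]) 2
    _ = x ^ 4 / 4 := by ring

lemma one_sub_cos_eq_mul_sinc_sq (x : ℝ) : 1 - cos x = x ^ 2 / 2 * sinc (x / 2) ^ 2 := by
  rcases eq_or_ne x 0 with rfl | hx
  · simp
  · have hcos : cos x = 1 - 2 * sin (x / 2) ^ 2 := by
      have h := cos_two_mul (x / 2)
      rw [mul_div_cancel₀ x two_ne_zero, cos_sq'] at h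
      linarith
    rw [sinc_of_ne_zero (by positivity), hcos]
    field_simp
    ring

lemma tendsto_pow_four_mul_one_sub_cos_sq (x : ℝ) :
    Tendsto (fun n : ℕ => (n : ℝ) ^ 4 * (1 - cos ((n : ℝ)⁻¹ * x)) ^ 2) atTop (𝓝 (x ^ 4 / 4)) := by
  have hsinc : Tendsto (fun n : ℕ => sinc ((n : ℝ)⁻¹ * x / 2)) atTop (𝓝 1) := by
    rw [← sinc_zero]
    refine (continuous_sinc.tendsto 0).comp ?_
    simpa using (tendsto_inv_atTop_nhds_zero_nat (𝕜 := ℝ)).mul_const x |>.div_const 2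
  have hlim := (hsinc.pow 2).const_mul (x ^ 2 / 2) |>.pow 2
  rw [show (x ^ 2 / 2 * 1 ^ 2) ^ 2 = x ^ 4 / 4 by ring] at hlim
  refine hlim.congr' ?_
  filter_upwards [eventually_ne_atTop 0] with n hn
  rw [one_sub_cos_eq_mul_sinc_sq]
  field_simp

lemma two_mul_one_sub_cos_sq (x : ℝ) :
    2 * (1 - cos x) ^ 2 = (cos (2 * x) - 1) - 4 * (cos x - 1) := by
  rw [cos_two_mul]; ring

end Real

namespace Complex

lemma norm_exp_I_mul_ofReal_sub_one_sub_le (x : ℝ) :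
    ‖exp (I * x) - 1 - I * x‖ ≤ 2 * x ^ 2 := by
  have hIx : ‖I * x‖ = |x| := by simp
  rcases le_or_gt |x| 1 with hx | hx
  · calc _ ≤ ‖I * x‖ ^ 2 := norm_exp_sub_one_sub_id_le (hIx ▸ hx)
      _ ≤ 2 * x ^ 2 := by rw [hIx, sq_abs]; nlinarith [sq_nonneg x]
  · calc _ ≤ ‖exp (I * x) - 1‖ + ‖I * x‖ := norm_sub_le _ _
      _ ≤ |x| + |x| := by rw [hIx]; gcongr; exact Real.norm_exp_I_mul_ofReal_sub_one_le
      _ ≤ 2 * x ^ 2 := by nlinarith [sq_abs x]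

lemma re_exp_I_mul_ofReal_sub_one_sub (x : ℝ) :
    (exp (I * x) - 1 - I * x).re = Real.cos x - 1 := by
  simp [mul_comm I, exp_ofReal_mul_I_re]

lemma exp_sub_one_sub_isBigO_sq {α : Type*} {l : Filter α} {ψ : α → ℂ}
    (hψ : Tendsto ψ l (𝓝 0)) :
    (fun a => exp (ψ a) - 1 - ψ a) =O[l] fun a => ψ a ^ 2 :=
  .of_bound 1 <| (hψ.eventually (Metric.closedBall_mem_nhds 0 one_pos)).mono fun a ha => by
    rw [one_mul, norm_pow]
    exact norm_exp_sub_one_sub_id_le (by simpa using ha)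

end Complex

section FourthMoment

variable {α : Type*} [MeasurableSpace α] {ν : Measure α} {g : α → ℝ}

lemma memLp_four_iff_integrable_pow_four (hg : AEStronglyMeasurable g ν) :
    MemLp g 4 ν ↔ Integrable (fun x => g x ^ 4) ν := by
  rw [← integrable_norm_rpow_iff hg (by norm_num) (by norm_num)]
  refine integrable_congr (Eventually.of_forall fun x => ?_)
  simp [Real.norm_eq_abs, Even.pow_abs ⟨2, rfl⟩]

lemma memLp_sq_two_iff_integrable_pow_four (hg : AEStronglyMeasurable g ν) :
    MemLp (fun x => g x ^ 2) 2 ν ↔ Integrable (fun x => g x ^ 4) ν := by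
  rw [memLp_two_iff_integrable_sq (by fun_prop)]
  simp only [← pow_mul]

lemma integrable_one_sub_cos_mul_sq [IsFiniteMeasure ν] (hg : AEMeasurable g ν) (c : ℝ) :
    Integrable (fun x => (1 - Real.cos (c * g x)) ^ 2) ν :=
  .of_bound (by fun_prop) 4 (Eventually.of_forall fun x => by
    have := Real.neg_one_le_cos (c * g x)
    have := Real.cos_le_one (c * g x)
    rw [Real.norm_eq_abs, abs_of_nonneg (sq_nonneg _)]
    nlinarith)

lemma integral_one_sub_cos_mul_sq_le (hg : Integrable (fun x => g x ^ 4) ν) (c : ℝ) :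
    ∫ x, (1 - Real.cos (c * g x)) ^ 2 ∂ν ≤ c ^ 4 / 4 * ∫ x, g x ^ 4 ∂ν := by
  rw [← integral_const_mul]
  refine integral_mono_of_nonneg (Eventually.of_forall fun x => sq_nonneg _) (hg.const_mul _)
    (Eventually.of_forall fun x => ?_)
  calc (1 - Real.cos (c * g x)) ^ 2 ≤ (c * g x) ^ 4 / 4 := Real.one_sub_cos_sq_le _
    _ = c ^ 4 / 4 * g x ^ 4 := by ring

lemma lintegral_pow_four_div_four_le [IsFiniteMeasure ν] (hg : AEMeasurable g ν) {K : ℝ}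
    (hK : ∀ᶠ n : ℕ in atTop, (n : ℝ) ^ 4 * ∫ x, (1 - Real.cos ((n : ℝ)⁻¹ * g x)) ^ 2 ∂ν ≤ K) :
    ∫⁻ x, ENNReal.ofReal (g x ^ 4 / 4) ∂ν ≤ ENNReal.ofReal K := by
  set F : ℕ → α → ℝ := fun n x => (n : ℝ) ^ 4 * (1 - Real.cos ((n : ℝ)⁻¹ * g x)) ^ 2
  have hF : ∀ n, ENNReal.ofReal (∫ x, F n x ∂ν) = ∫⁻ x, ENNReal.ofReal (F n x) ∂ν := fun n =>
    ofReal_integral_eq_lintegral_ofReal ((integrable_one_sub_cos_mul_sq hg _).const_mul _)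
      (Eventually.of_forall fun x => by positivity)
  calc ∫⁻ x, ENNReal.ofReal (g x ^ 4 / 4) ∂ν
      = ∫⁻ x, liminf (fun n => ENNReal.ofReal (F n x)) atTop ∂ν := lintegral_congr fun x =>
        ((ENNReal.continuous_ofReal.tendsto _).comp
          (Real.tendsto_pow_four_mul_one_sub_cos_sq (g x))).liminf_eq.symm
    _ ≤ liminf (fun n => ∫⁻ x, ENNReal.ofReal (F n x) ∂ν) atTop :=
        lintegral_liminf_le' fun n => by fun_prop
    _ ≤ ENNReal.ofReal K := by
        refine liminf_le_of_frequently_le' (hK.mono fun n hn => ?_).frequently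
        rw [← hF, integral_const_mul]
        exact ENNReal.ofReal_le_ofReal hn

lemma integrable_pow_four_iff_isBigO [IsFiniteMeasure ν] (hg : AEMeasurable g ν) :
    Integrable (fun x => g x ^ 4) ν ↔
      (fun c => ∫ x, (1 - Real.cos (c * g x)) ^ 2 ∂ν) =O[𝓝 0] fun c => c ^ 4 := by
  refine ⟨fun hg4 => .of_bound ((∫ x, g x ^ 4 ∂ν) / 4) (Eventually.of_forall fun c => ?_),
    fun hO => ?_⟩
  · rw [Real.norm_of_nonneg (integral_nonneg fun x => sq_nonneg _),
      Real.norm_of_nonneg (by positivity)]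
    linarith [integral_one_sub_cos_mul_sq_le hg4 c]
  · obtain ⟨K, hK⟩ := hO.bound
    have hn : ∀ᶠ n : ℕ in atTop,
        (n : ℝ) ^ 4 * ∫ x, (1 - Real.cos ((n : ℝ)⁻¹ * g x)) ^ 2 ∂ν ≤ K := by
      filter_upwards [tendsto_inv_atTop_nhds_zero_nat.eventually hK, eventually_ne_atTop 0]
        with n hn hn0
      rw [Real.norm_of_nonneg (integral_nonneg fun x => sq_nonneg _), norm_pow, norm_inv,
        Real.norm_natCast] at hn
      calc _ ≤ (n : ℝ) ^ 4 * (K * ((n : ℝ) ^ 4)⁻¹) := by gcongr; simpa [inv_pow] using hn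
        _ = K := by field_simp
    have hfin : Integrable (fun x => g x ^ 4 / 4) ν :=
      ⟨by fun_prop, (hasFiniteIntegral_iff_ofReal (Eventually.of_forall fun x => by positivity)).2
        ((lintegral_pow_four_div_four_le hg hn).trans_lt ENNReal.ofReal_lt_top)⟩
    simpa [mul_div_cancel₀] using hfin.const_mul 4

end FourthMoment

section CosineMoment

variable {α : Type*} [MeasurableSpace α] {ν : Measure α} {g : α → ℝ}

lemma two_mul_integral_one_sub_cos_mul_sq
    (hg : ∀ c, Integrable (fun x => Real.cos (c * g x) - 1) ν) (c : ℝ) :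
    2 * ∫ x, (1 - Real.cos (c * g x)) ^ 2 ∂ν =
      ∫ x, (Real.cos (2 * c * g x) - 1) ∂ν - 4 * ∫ x, (Real.cos (c * g x) - 1) ∂ν := by
  rw [← integral_const_mul, ← integral_const_mul, ← integral_sub (hg _) ((hg c).const_mul _)]
  congr 1 with x
  rw [Real.two_mul_one_sub_cos_sq, mul_assoc]

lemma integrable_cos_mul_sub_one [IsFiniteMeasure ν] (hg : AEMeasurable g ν) (c : ℝ) :
    Integrable (fun x => Real.cos (c * g x) - 1) ν :=
  .of_bound (by fun_prop) 2 (Eventually.of_forall fun x => by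
    rw [Real.norm_eq_abs, abs_le]
    constructor <;> linarith [Real.neg_one_le_cos (c * g x), Real.cos_le_one (c * g x)])

lemma integral_cos_mul_sub_one_eq_re_sub_one [IsProbabilityMeasure ν] (hg : AEMeasurable g ν)
    (c : ℝ) :
    ∫ x, (Real.cos (c * g x) - 1) ∂ν =
      (∫ x, Complex.exp (Complex.I * (c * g x : ℝ)) ∂ν).re - 1 := by
  have hint : Integrable (fun x => Complex.exp (Complex.I * (c * g x : ℝ))) ν :=
    .of_bound (by fun_prop) 1 (Eventually.of_forall fun x => (Complex.norm_exp_I_mul_ofReal _).le)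
  have hcos : Integrable (fun x => Real.cos (c * g x)) ν :=
    .of_bound (by fun_prop) 1 (Eventually.of_forall fun x => Real.abs_cos_le_one _)
  rw [integral_sub hcos (integrable_const 1), ← RCLike.re_to_complex, ← integral_re hint]
  simp only [RCLike.re_to_complex, mul_comm Complex.I,
    Complex.exp_ofReal_mul_I_re, integral_const, probReal_univ, one_smul]

end CosineMoment

section PoissonExponent

variable {α : Type*} [MeasurableSpace α] {ν : Measure α} {f : α → ℝ}

/-- The exponent of the characteristic function of `∫ f dL` for a compensated Poisson process `L`
with intensity `ν`. -/
noncomputable def compensatedPoissonExponent (ν : Measure α) (f : α → ℝ) (c : ℝ) : ℂ :=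
  ∫ t, (Complex.exp (Complex.I * (c * f t : ℝ)) - 1 - Complex.I * (c * f t : ℝ)) ∂ν

lemma integrable_exp_I_mul_sub_one_sub (hf : MemLp f 2 ν) (c : ℝ) :
    Integrable (fun t => Complex.exp (Complex.I * (c * f t : ℝ)) - 1 - Complex.I * (c * f t : ℝ))
      ν := by
  have hφ : Continuous fun x : ℝ => Complex.exp (Complex.I * x) - 1 - Complex.I * x := by fun_prop
  refine .mono' (hf.integrable_sq.const_mul (2 * c ^ 2))
    (hφ.comp_aestronglyMeasurable (hf.1.const_mul c))
    (Eventually.of_forall fun t => ?_)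
  calc _ ≤ 2 * (c * f t) ^ 2 := Complex.norm_exp_I_mul_ofReal_sub_one_sub_le _
    _ = 2 * c ^ 2 * f t ^ 2 := by ring

lemma integrable_cos_mul_sub_one_of_memLp (hf : MemLp f 2 ν) (c : ℝ) :
    Integrable (fun t => Real.cos (c * f t) - 1) ν := by
  simpa only [RCLike.re_to_complex, Complex.re_exp_I_mul_ofReal_sub_one_sub] using
    (integrable_exp_I_mul_sub_one_sub hf c).re

lemma re_compensatedPoissonExponent (hf : MemLp f 2 ν) (c : ℝ) :
    (compensatedPoissonExponent ν f c).re = ∫ t, (Real.cos (c * f t) - 1) ∂ν := by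
  rw [compensatedPoissonExponent, ← RCLike.re_to_complex,
    ← integral_re (integrable_exp_I_mul_sub_one_sub hf c)]
  simp only [RCLike.re_to_complex, Complex.re_exp_I_mul_ofReal_sub_one_sub]

lemma compensatedPoissonExponent_isBigO_sq (hf : MemLp f 2 ν) (l : Filter ℝ) :
    compensatedPoissonExponent ν f =O[l] fun c => c ^ 2 := by
  refine .of_bound (2 * ∫ t, f t ^ 2 ∂ν) (Eventually.of_forall fun c => ?_)
  calc ‖compensatedPoissonExponent ν f c‖ ≤ ∫ t, 2 * c ^ 2 * f t ^ 2 ∂ν := by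
        refine norm_integral_le_of_norm_le (hf.integrable_sq.const_mul _)
          (Eventually.of_forall fun t => ?_)
        calc _ ≤ 2 * (c * f t) ^ 2 := Complex.norm_exp_I_mul_ofReal_sub_one_sub_le _
          _ = 2 * c ^ 2 * f t ^ 2 := by ring
    _ = 2 * (∫ t, f t ^ 2 ∂ν) * ‖c ^ 2‖ := by
        rw [integral_const_mul, Real.norm_of_nonneg (sq_nonneg c)]; ring

lemma exp_compensatedPoissonExponent_sub_one_sub_isBigO (hf : MemLp f 2 ν) :
    (fun c => Complex.exp (compensatedPoissonExponent ν f c) - 1 - compensatedPoissonExponent ν f c)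
      =O[𝓝 0] fun c => c ^ 4 := by
  have hψ := compensatedPoissonExponent_isBigO_sq hf (𝓝 0)
  have hsq : Tendsto (fun c : ℝ => c ^ 2) (𝓝 0) (𝓝 0) := by
    simpa using (continuous_pow 2).tendsto (0 : ℝ)
  refine (Complex.exp_sub_one_sub_isBigO_sq (hψ.trans_tendsto hsq)).trans ?_
  simpa only [← pow_mul] using hψ.pow 2

end PoissonExponent

lemma integral_one_sub_cos_sq_sub_isBigO {Ω α : Type*} [MeasurableSpace Ω] [MeasurableSpace α]
    {μ : Measure Ω} [IsProbabilityMeasure μ] {ν : Measure α} {S : Ω → ℝ} {f : α → ℝ}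
    (hS : AEMeasurable S μ) (hf : MemLp f 2 ν)
    (hchar : ∀ c : ℝ, ∫ ω, Complex.exp (Complex.I * (c * S ω : ℝ)) ∂μ =
      Complex.exp (compensatedPoissonExponent ν f c)) :
    (fun c => ∫ ω, (1 - Real.cos (c * S ω)) ^ 2 ∂μ - ∫ t, (1 - Real.cos (c * f t)) ^ 2 ∂ν)
      =O[𝓝 0] fun c => c ^ 4 := by
  set ψ := compensatedPoissonExponent ν f
  set E : ℝ → ℂ := fun c => Complex.exp (ψ c) - 1 - ψ c
  have hE : E =O[𝓝 0] fun c => c ^ 4 := exp_compensatedPoissonExponent_sub_one_sub_isBigO hf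
  have hE2 : (fun c => E (2 * c)) =O[𝓝 0] fun c => c ^ 4 := by
    have h2c : Tendsto (fun c : ℝ => 2 * c) (𝓝 0) (𝓝 0) := by
      simpa using (continuous_const_mul (2 : ℝ)).tendsto 0
    refine (hE.comp_tendsto h2c).trans ?_
    simpa only [Function.comp_def, mul_pow] using
      isBigO_const_mul_self ((2 : ℝ) ^ 4) (fun c : ℝ => c ^ 4) (𝓝 0)
  have key : ∀ c, ∫ ω, (1 - Real.cos (c * S ω)) ^ 2 ∂μ - ∫ t, (1 - Real.cos (c * f t)) ^ 2 ∂ν =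
      2⁻¹ * (E (2 * c) - 4 * E c).re := by
    intro c
    have hμ := two_mul_integral_one_sub_cos_mul_sq (integrable_cos_mul_sub_one hS) c
    have hν := two_mul_integral_one_sub_cos_mul_sq (integrable_cos_mul_sub_one_of_memLp hf) c
    rw [integral_cos_mul_sub_one_eq_re_sub_one hS, integral_cos_mul_sub_one_eq_re_sub_one hS,
      hchar, hchar] at hμ
    rw [← re_compensatedPoissonExponent hf, ← re_compensatedPoissonExponent hf] at hν
    simp only [E, Complex.sub_re, Complex.mul_re, Complex.one_re, Complex.re_ofNat,
      Complex.im_ofNat, zero_mul, sub_zero]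
    linarith
  simp only [key]
  exact ((Complex.reCLM.isBigO_comp _ _).trans (hE2.sub (hE.const_mul_left 4))).const_mul_left _

theorem poisson_integral_sq_memL2_iff_L4_general
    {Ω : Type*} [MeasurableSpace Ω] (μ : Measure Ω) [IsProbabilityMeasure μ]
    (T : ℝ) (f : ℝ → ℝ)
    (hf : MemLp f 2 (volume.restrict (Set.Ioc 0 T)))
    (S : Ω → ℝ) (hS : Measurable S)
    (hchar : ∀ c : ℝ,
      ∫ ω, Complex.exp (Complex.I * (c * S ω : ℝ)) ∂μ =
        Complex.exp (∫ t in Set.Ioc (0:ℝ) T,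
          (Complex.exp (Complex.I * (c * f t : ℝ)) - 1 - Complex.I * (c * f t : ℝ)))) :
    MemLp (fun ω => (S ω) ^ 2) 2 μ ↔ MemLp f 4 (volume.restrict (Set.Ioc 0 T)) := by
  have hdiff := integral_one_sub_cos_sq_sub_isBigO hS.aemeasurable hf hchar
  rw [memLp_sq_two_iff_integrable_pow_four hS.aestronglyMeasurable,
    memLp_four_iff_integrable_pow_four hf.1, integrable_pow_four_iff_isBigO hS.aemeasurable,
    integrable_pow_four_iff_isBigO hf.1.aemeasurable]
  exact ⟨fun h => (h.sub hdiff).congr_left fun c => by ring,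
    fun h => (h.add hdiff).congr_left fun c => by ring⟩

/-- For a standard Poisson process `N` with compensated process
`L_t = N_t - t` and `f ∈ L²((0,T])`, the stochastic integral `S = ∫₀^T f(t) dL_t`
(characterized by its characteristic function
`E[e^{icS}] = exp(∫₀^T (e^{ic f(t)} − 1 − ic f(t)) dt)`), satisfies:
`S²` is square integrable iff `f ∈ L⁴((0,T])`. -/
theorem poisson_integral_sq_memL2_iff_L4
    {Ω : Type*} [MeasurableSpace Ω] (μ : Measure Ω) [IsProbabilityMeasure μ]
    (T : ℝ) (hT : 0 < T) (f : ℝ → ℝ)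
    (hf : MemLp f 2 (volume.restrict (Set.Ioc 0 T)))
    (S : Ω → ℝ) (hS : Measurable S)
    (hchar : ∀ c : ℝ,
      ∫ ω, Complex.exp (Complex.I * (c * S ω : ℝ)) ∂μ =
        Complex.exp (∫ t in Set.Ioc (0:ℝ) T,
          (Complex.exp (Complex.I * (c * f t : ℝ)) - 1 - Complex.I * (c * f t : ℝ)))) :
    MemLp (fun ω => (S ω) ^ 2) 2 μ ↔ MemLp f 4 (volume.restrict (Set.Ioc 0 T)) :=
  poisson_integral_sq_memL2_iff_L4_general μ T f hf S hS hchar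
end

section
/- For every integer N ≥ 3 and α ∈ (0,1), the limit as T → ∞ of (∫₀^T e^{N t^α} dt) / (∫₀^T e^{2 t^α} dt)^{N/2} equals 0. -/
open MeasureTheory Filter Real Set Topology

/-!
Write `I_k(T) = ∫₀^T e^{k t^α}`. Bounding `t^α` by its tangent line at `T` (concavity) gives
`I_k(T) ≤ T^{1-α} e^{k T^α} / (k α)`. Conversely, on the last stretch `[T - T^{1-α}, T]` the
exponent `t^α` drops by at most `2`, so `I_j(T) ≥ T^{1-α} e^{j (T^α - 2)}`. The exponentials cancel
in `I_k / I_j^{k/j}`, leaving `O(T^{(1-α)(1-k/j)})`, which tends to `0` when `j < k` and `α < 1`.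
-/

lemma rpow_le_rpow_add_mul_sub {α b t : ℝ} (hb : 0 < b) (ht : 0 ≤ t) (h0 : 0 ≤ α)
    (h1 : α ≤ 1) : t ^ α ≤ b ^ α + α * b ^ (α - 1) * (t - b) := by
  have hs : -1 ≤ t / b - 1 := by have := div_nonneg ht hb.le; linarith
  have key := rpow_one_add_le_one_add_mul_self hs h0 h1
  rw [add_sub_cancel, div_rpow ht hb.le, div_le_iff₀ (rpow_pos_of_pos hb α)] at key
  calc t ^ α ≤ (1 + α * (t / b - 1)) * b ^ α := key
    _ = b ^ α + α * (b ^ α / b) * (t - b) := by field_simp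
    _ = b ^ α + α * b ^ (α - 1) * (t - b) := by rw [rpow_sub_one hb.ne']

lemma continuous_exp_mul_rpow (k : ℝ) {α : ℝ} (h0 : 0 ≤ α) :
    Continuous fun t : ℝ => exp (k * t ^ α) :=
  continuous_exp.comp (continuous_const.mul (continuous_rpow_const h0))

lemma integral_exp_mul_sub_le {c T : ℝ} (hc : 0 < c) (hT : 0 ≤ T) :
    ∫ t in Icc 0 T, exp (c * (t - T)) ≤ c⁻¹ := by
  rw [integral_Icc_eq_integral_Ioc, ← intervalIntegral.integral_of_le hT]
  simp_rw [mul_sub]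
  rw [intervalIntegral.integral_comp_mul_sub (fun x => exp x) hc.ne', integral_exp]
  simp only [mul_zero, zero_sub, sub_self, exp_zero, smul_eq_mul]
  exact mul_le_of_le_one_right (inv_pos.mpr hc).le (by linarith [exp_pos (-(c * T))])

lemma integral_exp_rpow_le {k α T : ℝ} (hk : 0 < k) (h0 : 0 < α) (h1 : α ≤ 1) (hT : 0 < T) :
    ∫ t in Icc 0 T, exp (k * t ^ α) ≤ (k * α)⁻¹ * T ^ (1 - α) * exp (k * T ^ α) := by
  set c := k * α * T ^ (α - 1)
  have hc : 0 < c := by positivity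
  have hc_inv : c⁻¹ = (k * α)⁻¹ * T ^ (1 - α) := by
    rw [mul_inv, ← rpow_neg hT.le, neg_sub]
  have htangent : ∀ t ∈ Icc 0 T, exp (k * t ^ α) ≤ exp (k * T ^ α) * exp (c * (t - T)) := by
    intro t ht
    rw [← exp_add, exp_le_exp]
    have := mul_le_mul_of_nonneg_left (rpow_le_rpow_add_mul_sub hT ht.1 h0.le h1) hk.le
    linarith
  calc ∫ t in Icc 0 T, exp (k * t ^ α)
      ≤ ∫ t in Icc 0 T, exp (k * T ^ α) * exp (c * (t - T)) :=
        setIntegral_mono_on (continuous_exp_mul_rpow k h0.le).integrableOn_Icc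
          (by fun_prop : Continuous _).integrableOn_Icc measurableSet_Icc htangent
    _ = exp (k * T ^ α) * ∫ t in Icc 0 T, exp (c * (t - T)) := integral_const_mul _ _
    _ ≤ exp (k * T ^ α) * c⁻¹ :=
        mul_le_mul_of_nonneg_left (integral_exp_mul_sub_le hc hT.le) (exp_pos _).le
    _ = (k * α)⁻¹ * T ^ (1 - α) * exp (k * T ^ α) := by rw [hc_inv, mul_comm]

lemma rpow_one_sub_le_half {α T : ℝ} (hT : 0 < T) (hTα : 2 ≤ T ^ α) :
    T ^ (1 - α) ≤ T / 2 := by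
  rw [rpow_sub hT, rpow_one]
  exact div_le_div_of_nonneg_left hT.le two_pos hTα

lemma rpow_sub_rpow_sub_le_two {α T : ℝ} (h0 : 0 ≤ α) (h1 : α ≤ 1) (hT : 0 < T)
    (hTα : 2 ≤ T ^ α) : T ^ α - (T - T ^ (1 - α)) ^ α ≤ 2 := by
  set b := T - T ^ (1 - α)
  have hδ := rpow_one_sub_le_half hT hTα
  have hb : T / 2 ≤ b := by linarith
  have hbpos : 0 < b := by linarith
  have hslope : α * b ^ (α - 1) * T ^ (1 - α) = α * (T / b) ^ (1 - α) := by
    rw [div_rpow hT.le hbpos.le, div_eq_mul_inv, ← rpow_neg hbpos.le, neg_sub]; ring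
  have hTb : (T / b) ^ (1 - α) ≤ 2 :=
    calc (T / b) ^ (1 - α) ≤ 2 ^ (1 - α) :=
          rpow_le_rpow (by positivity) ((div_le_iff₀ hbpos).mpr (by linarith)) (by linarith)
      _ ≤ 2 ^ (1 : ℝ) := rpow_le_rpow_of_exponent_le one_le_two (by linarith)
      _ = 2 := rpow_one 2
  have := rpow_le_rpow_add_mul_sub hbpos hT.le h0 h1
  rw [show T - b = T ^ (1 - α) by ring, hslope] at this
  linarith [mul_le_mul h1 hTb (by positivity) zero_le_one]

lemma le_integral_exp_rpow {k α T : ℝ} (hk : 0 ≤ k) (h0 : 0 ≤ α) (h1 : α ≤ 1) (hT : 0 < T)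
    (hTα : 2 ≤ T ^ α) :
    T ^ (1 - α) * exp (k * (T ^ α - 2)) ≤ ∫ t in Icc 0 T, exp (k * t ^ α) := by
  set b := T - T ^ (1 - α)
  have hgap := rpow_sub_rpow_sub_le_two h0 h1 hT hTα
  have hbpos : 0 < b := by linarith [rpow_one_sub_le_half hT hTα]
  have hvol : volume.real (Icc b T) = T ^ (1 - α) := by
    rw [measureReal_def, Real.volume_Icc, sub_sub_cancel, ENNReal.toReal_ofReal (by positivity)]
  have hint : IntegrableOn (fun t => exp (k * t ^ α)) (Icc 0 T) :=
    (continuous_exp_mul_rpow k h0).integrableOn_Icc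
  calc T ^ (1 - α) * exp (k * (T ^ α - 2))
      ≤ ∫ t in Icc b T, exp (k * t ^ α) := by
        rw [mul_comm, ← hvol]
        refine setIntegral_ge_of_const_le_real measurableSet_Icc measure_Icc_lt_top.ne
          (fun t ht => ?_) (hint.mono_set (Icc_subset_Icc_left hbpos.le))
        have := rpow_le_rpow hbpos.le ht.1 h0
        exact exp_le_exp.mpr (mul_le_mul_of_nonneg_left (by linarith) hk)
    _ ≤ ∫ t in Icc 0 T, exp (k * t ^ α) :=
        setIntegral_mono_set hint (Eventually.of_forall fun t => (exp_pos _).le)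
          (Eventually.of_forall (Icc_subset_Icc_left hbpos.le))

lemma integral_exp_rpow_div_rpow_le {j k α T : ℝ} (hj : 0 < j) (hk : 0 < k) (h0 : 0 < α)
    (h1 : α ≤ 1) (hT : 0 < T) (hTα : 2 ≤ T ^ α) :
    (∫ t in Icc 0 T, exp (k * t ^ α)) / (∫ t in Icc 0 T, exp (j * t ^ α)) ^ (k / j) ≤
      (k * α)⁻¹ * exp (2 * k) * T ^ ((1 - α) * (1 - k / j)) := by
  set δ := T ^ (1 - α)
  have hδ : 0 < δ := rpow_pos_of_pos hT _
  have hpow : (δ * exp (j * (T ^ α - 2))) ^ (k / j) =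
      δ ^ (k / j) * (exp (k * T ^ α) * exp (-(2 * k))) := by
    rw [mul_rpow hδ.le (exp_pos _).le, ← exp_mul, ← exp_add]
    congr 2
    field_simp
    ring
  calc _ ≤ (k * α)⁻¹ * δ * exp (k * T ^ α) / (δ * exp (j * (T ^ α - 2))) ^ (k / j) :=
        div_le_div₀ (by positivity) (integral_exp_rpow_le hk h0 h1 hT) (by positivity)
          (rpow_le_rpow (by positivity) (le_integral_exp_rpow hj.le h0.le h1 hT hTα)
            (by positivity))
    _ = (k * α)⁻¹ * exp (2 * k) * (δ ^ (1 : ℝ) / δ ^ (k / j)) := by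
        rw [hpow, rpow_one, exp_neg]
        field_simp
    _ = (k * α)⁻¹ * exp (2 * k) * T ^ ((1 - α) * (1 - k / j)) := by
        rw [← rpow_sub hδ, ← rpow_mul hT.le]

theorem tendsto_integral_exp_rpow_div_rpow {j k α : ℝ} (hj : 0 < j) (hjk : j < k) (h0 : 0 < α)
    (h1 : α < 1) :
    Tendsto (fun T => (∫ t in Icc 0 T, exp (k * t ^ α)) /
      (∫ t in Icc 0 T, exp (j * t ^ α)) ^ (k / j)) atTop (𝓝 0) := by
  have hβ : 0 < (1 - α) * (k / j - 1) :=
    mul_pos (by linarith) (by rw [sub_pos, one_lt_div hj]; exact hjk)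
  have hbound : Tendsto (fun T : ℝ => (k * α)⁻¹ * exp (2 * k) * T ^ ((1 - α) * (1 - k / j)))
      atTop (𝓝 0) := by
    have := (tendsto_rpow_neg_atTop hβ).const_mul ((k * α)⁻¹ * exp (2 * k))
    rw [mul_zero] at this
    convert this using 4
    ring
  refine tendsto_of_tendsto_of_tendsto_of_le_of_le' tendsto_const_nhds hbound ?_ ?_
  · filter_upwards with T
    exact div_nonneg (setIntegral_nonneg measurableSet_Icc fun t _ => (exp_pos _).le)
      (rpow_nonneg (setIntegral_nonneg measurableSet_Icc fun t _ => (exp_pos _).le) _)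
  · filter_upwards [eventually_gt_atTop 0, (tendsto_rpow_atTop h0).eventually_ge_atTop 2]
      with T hT hTα
    exact integral_exp_rpow_div_rpow_le hj (hj.trans hjk) h0 h1.le hT hTα

/-- For every integer `N ≥ 3` and `α ∈ (0,1)`,
`(∫₀^T e^{N t^α} dt) / (∫₀^T e^{2 t^α} dt)^{N/2} → 0` as `T → ∞`. -/
theorem ratio_exp_rpow_tendsto_zero (N : ℕ) (hN : 3 ≤ N) (α : ℝ) (h0 : 0 < α) (h1 : α < 1) :
    Filter.Tendsto
      (fun T : ℝ =>
        (∫ t in Set.Icc (0:ℝ) T, Real.exp (N * t ^ α)) /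
          (∫ t in Set.Icc (0:ℝ) T, Real.exp (2 * t ^ α)) ^ ((N : ℝ) / 2))
      Filter.atTop (nhds 0) :=
  tendsto_integral_exp_rpow_div_rpow two_pos (by exact_mod_cast hN) h0 h1
end

section
/- For every integer N ≥ 3 and α > 1, the ratio (∫₀^T e^{N t^α} dt) / (∫₀^T e^{2 t^α} dt)^{N/2} tends to +∞ as T → ∞. -/
open MeasureTheory Filter Real

lemma contOn_exp (k α : ℝ) (hα : 0 ≤ α) (s : Set ℝ) :
    ContinuousOn (fun t : ℝ => Real.exp (k * t ^ α)) s :=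
  Real.continuous_exp.comp_continuousOn
    (continuousOn_const.mul (continuousOn_id.rpow_const (fun _ _ => Or.inr hα)))

lemma contOn_pow (β : ℝ) (hβ : 0 ≤ β) (s : Set ℝ) :
    ContinuousOn (fun t : ℝ => t ^ β) s :=
  continuousOn_id.rpow_const (fun _ _ => Or.inr hβ)

lemma hasDeriv (k α : ℝ) (hα : 1 ≤ α) (t : ℝ) :
    HasDerivAt (fun t : ℝ => Real.exp (k * t ^ α))
      (k * α * t ^ (α - 1) * Real.exp (k * t ^ α)) t := by
  have h1 : HasDerivAt (fun x : ℝ => x ^ α) (α * t ^ (α - 1)) t :=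
    Real.hasDerivAt_rpow_const (Or.inr hα)
  have h2 := (h1.const_mul k).exp
  convert h2 using 1
  ring

lemma ftc (k α T : ℝ) (hα : 1 ≤ α) :
    ∫ t in (0:ℝ)..T, k * α * t ^ (α - 1) * Real.exp (k * t ^ α)
      = Real.exp (k * T ^ α) - Real.exp (k * 0 ^ α) := by
  apply intervalIntegral.integral_eq_sub_of_hasDerivAt
  · exact fun t _ => hasDeriv k α hα t
  · apply ContinuousOn.intervalIntegrable
    exact ((continuousOn_const.mul (contOn_pow (α - 1) (by linarith) _)).mul
      (contOn_exp k α (by linarith) _))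

lemma icc_eq (T : ℝ) (hT : 0 ≤ T) (f : ℝ → ℝ) :
    ∫ t in Set.Icc (0:ℝ) T, f t = ∫ t in (0:ℝ)..T, f t := by
  rw [intervalIntegral.integral_of_le hT, MeasureTheory.integral_Icc_eq_integral_Ioc]

lemma num_lb (k α T : ℝ) (hk : 0 < k) (hα : 1 < α) (hT : 0 ≤ T) :
    Real.exp (k * T ^ α) - 1
      ≤ k * α * T ^ (α - 1) * ∫ t in (0:ℝ)..T, Real.exp (k * t ^ α) := by
  have h0 : Real.exp (k * (0:ℝ) ^ α) = 1 := by
    rw [Real.zero_rpow (by linarith), mul_zero, Real.exp_zero]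
  rw [← intervalIntegral.integral_const_mul]
  calc Real.exp (k * T ^ α) - 1
      = ∫ t in (0:ℝ)..T, k * α * t ^ (α - 1) * Real.exp (k * t ^ α) := by
        rw [ftc k α T hα.le, h0]
    _ ≤ ∫ t in (0:ℝ)..T, k * α * T ^ (α - 1) * Real.exp (k * t ^ α) := by
        apply intervalIntegral.integral_mono_on hT
        · exact (((continuousOn_const.mul (contOn_pow (α - 1) (by linarith) _)).mul
            (contOn_exp k α (by linarith) _))).intervalIntegrable
        · exact (continuousOn_const.mul (contOn_exp k α (by linarith) _)).intervalIntegrable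
        · intro t ht
          have htβ : t ^ (α - 1) ≤ T ^ (α - 1) :=
            Real.rpow_le_rpow ht.1 ht.2 (by linarith)
          have he := Real.exp_pos (k * t ^ α)
          have hkα : 0 < k * α := by positivity
          exact mul_le_mul_of_nonneg_right (mul_le_mul_of_nonneg_left htβ hkα.le) he.le

lemma den_ub (α T : ℝ) (hα : 1 < α) (hT : 0 < T) :
    ∫ t in (0:ℝ)..T, Real.exp (2 * t ^ α)
      ≤ T / 2 * Real.exp (2 * (T / 2) ^ α)
        + (2 / T) ^ (α - 1) * (Real.exp (2 * T ^ α) / (2 * α)) := by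
  have hβ : (0:ℝ) ≤ α - 1 := by linarith
  have hα0 : (0:ℝ) ≤ α := by linarith
  have hInt1 : IntervalIntegrable (fun t : ℝ => Real.exp (2 * t ^ α)) volume 0 (T/2) :=
    (contOn_exp 2 α hα0 _).intervalIntegrable
  have hInt2 : IntervalIntegrable (fun t : ℝ => Real.exp (2 * t ^ α)) volume (T/2) T :=
    (contOn_exp 2 α hα0 _).intervalIntegrable
  have hIntg : ∀ a b : ℝ, IntervalIntegrable
      (fun t : ℝ => t ^ (α - 1) * Real.exp (2 * t ^ α)) volume a b :=
    fun a b => ((contOn_pow (α-1) hβ _).mul (contOn_exp 2 α hα0 _)).intervalIntegrable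
  have hsplit : ∫ t in (0:ℝ)..T, Real.exp (2 * t ^ α)
      = (∫ t in (0:ℝ)..(T/2), Real.exp (2 * t ^ α))
        + ∫ t in (T/2)..T, Real.exp (2 * t ^ α) :=
    (intervalIntegral.integral_add_adjacent_intervals hInt1 hInt2).symm
  rw [hsplit]
  gcongr ?_ + ?_
  · -- first piece ≤ (T/2) * exp(2 (T/2)^α)
    calc (∫ t in (0:ℝ)..(T/2), Real.exp (2 * t ^ α))
        ≤ ∫ _t in (0:ℝ)..(T/2), Real.exp (2 * (T/2) ^ α) := by
          apply intervalIntegral.integral_mono_on (by linarith) hInt1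
            intervalIntegrable_const
          intro t ht
          exact Real.exp_le_exp.2 (by
            have := Real.rpow_le_rpow ht.1 ht.2 hα0
            linarith)
      _ = T / 2 * Real.exp (2 * (T/2) ^ α) := by
          rw [intervalIntegral.integral_const, smul_eq_mul, sub_zero]
  · -- second piece
    have step1 : (∫ t in (T/2)..T, Real.exp (2 * t ^ α))
        ≤ ∫ t in (T/2)..T, (2 / T) ^ (α - 1) * (t ^ (α - 1) * Real.exp (2 * t ^ α)) := by
      apply intervalIntegral.integral_mono_on (by linarith) hInt2
        (((hIntg _ _).const_mul _))
      intro t ht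
      have ht0 : 0 ≤ t := le_trans (by linarith) ht.1
      have h1 : (1:ℝ) ≤ (2 / T) * t := by
        rw [div_mul_eq_mul_div, le_div_iff₀ hT]
        linarith [ht.1]
      have h2 : (1:ℝ) ≤ ((2 / T) * t) ^ (α - 1) := Real.one_le_rpow h1 hβ
      rw [Real.mul_rpow (by positivity) ht0] at h2
      have he := Real.exp_pos (2 * t ^ α)
      nlinarith
    have step2 : (∫ t in (T/2)..T, t ^ (α - 1) * Real.exp (2 * t ^ α))
        ≤ Real.exp (2 * T ^ α) / (2 * α) := by
      have hadd : (∫ t in (0:ℝ)..(T/2), t ^ (α - 1) * Real.exp (2 * t ^ α))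
          + (∫ t in (T/2)..T, t ^ (α - 1) * Real.exp (2 * t ^ α))
          = ∫ t in (0:ℝ)..T, t ^ (α - 1) * Real.exp (2 * t ^ α) :=
        intervalIntegral.integral_add_adjacent_intervals (hIntg _ _) (hIntg _ _)
      have hnn : 0 ≤ ∫ t in (0:ℝ)..(T/2), t ^ (α - 1) * Real.exp (2 * t ^ α) := by
        apply intervalIntegral.integral_nonneg (by linarith)
        intro t ht
        have : (0:ℝ) ≤ t ^ (α - 1) := Real.rpow_nonneg ht.1 _
        positivity
      have hval : (∫ t in (0:ℝ)..T, t ^ (α - 1) * Real.exp (2 * t ^ α))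
          = (Real.exp (2 * T ^ α) - 1) / (2 * α) := by
        have := ftc 2 α T hα.le
        rw [Real.zero_rpow (by linarith), mul_zero, Real.exp_zero] at this
        rw [eq_div_iff (by positivity)]
        rw [← this, ← intervalIntegral.integral_mul_const]
        congr 1; ext t; ring
      have he := Real.exp_pos (2 * T ^ α)
      have h2α : (0:ℝ) < 2 * α := by positivity
      calc (∫ t in (T/2)..T, t ^ (α - 1) * Real.exp (2 * t ^ α))
          ≤ ∫ t in (0:ℝ)..T, t ^ (α - 1) * Real.exp (2 * t ^ α) := by
            rw [← hadd]; linarith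
        _ = (Real.exp (2 * T ^ α) - 1) / (2 * α) := hval
        _ ≤ Real.exp (2 * T ^ α) / (2 * α) := by
            gcongr
            linarith
    calc (∫ t in (T/2)..T, Real.exp (2 * t ^ α))
        ≤ ∫ t in (T/2)..T, (2 / T) ^ (α - 1) * (t ^ (α - 1) * Real.exp (2 * t ^ α)) := step1
      _ = (2 / T) ^ (α - 1) * ∫ t in (T/2)..T, t ^ (α - 1) * Real.exp (2 * t ^ α) :=
          intervalIntegral.integral_const_mul _ _
      _ ≤ (2 / T) ^ (α - 1) * (Real.exp (2 * T ^ α) / (2 * α)) := by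
          apply mul_le_mul_of_nonneg_left step2 (Real.rpow_nonneg (by positivity) _)

lemma cmp_ev (α : ℝ) (hα : 1 < α) :
    ∀ᶠ T in atTop, T / 2 * Real.exp (2 * (T / 2) ^ α)
      ≤ (2 / T) ^ (α - 1) * (Real.exp (2 * T ^ α) / (2 * α)) := by
  have hα0 : (0:ℝ) < α := by linarith
  set q : ℝ := (1/2 : ℝ) ^ α with hqdef
  have hq0 : 0 < q := Real.rpow_pos_of_pos (by norm_num) _
  have hq1 : q < 1 := Real.rpow_lt_one (by norm_num) (by norm_num) hα0
  set c : ℝ := 2 - 2 * q with hcdef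
  have hc : 0 < c := by simp only [hcdef]; linarith
  have h1 : Tendsto (fun u : ℝ => Real.exp (c * u) / (c * u) ^ (1:ℕ)) atTop atTop :=
    (Real.tendsto_exp_div_pow_atTop 1).comp (tendsto_const_mul_atTop_of_pos hc |>.2 tendsto_id)
  have h2 : ∀ᶠ u in atTop, 2 * α * q * u ≤ Real.exp (c * u) := by
    filter_upwards [h1.eventually_ge_atTop (2 * α * q / c), eventually_gt_atTop 0] with u h hu
    have hcu : 0 < c * u := by positivity
    rw [pow_one, le_div_iff₀ hcu] at h
    calc 2 * α * q * u = 2 * α * q / c * (c * u) := by field_simp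
      _ ≤ Real.exp (c * u) := h
  have h3 : Tendsto (fun T : ℝ => T ^ α) atTop atTop := tendsto_rpow_atTop hα0
  filter_upwards [h3.eventually h2, eventually_gt_atTop 0] with T hKey hT0
  have hT2 : (0:ℝ) < T / 2 := by linarith
  have eq1 : (T/2 : ℝ) ^ α = q * T ^ α := by
    rw [show (T/2:ℝ) = T * (1/2) by ring, Real.mul_rpow hT0.le (by norm_num)]; ring
  have eq2 : Real.exp (2 * T ^ α) = Real.exp (c * T ^ α) * Real.exp (2 * (T/2) ^ α) := by
    rw [← Real.exp_add]; congr 1; rw [eq1]; simp only [hcdef]; ring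
  have key : 2 * α * q * T ^ α * Real.exp (2 * (T/2) ^ α) ≤ Real.exp (2 * T ^ α) := by
    rw [eq2]; exact mul_le_mul_of_nonneg_right hKey (Real.exp_pos _).le
  have hB : (0:ℝ) < (2 / T) ^ (α - 1) := Real.rpow_pos_of_pos (by positivity) _
  have e4 : (T/2:ℝ) ^ (α - 1) * (T/2) = (T/2) ^ α := by
    have h := Real.rpow_add hT2 (α - 1) 1
    rw [sub_add_cancel] at h
    rw [h, Real.rpow_one]
  have e5 : (2/T:ℝ) ^ (α - 1) * (T/2) ^ (α - 1) = 1 := by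
    rw [← Real.mul_rpow (by positivity) hT2.le, show (2/T) * (T/2) = 1 by field_simp,
      Real.one_rpow]
  have eq3 : (2/T:ℝ) ^ (α - 1) * (2 * α * q * T ^ α) = T / 2 * (2 * α) := by
    calc (2/T:ℝ) ^ (α - 1) * (2 * α * q * T ^ α)
        = 2 * α * ((2/T) ^ (α - 1) * (q * T ^ α)) := by ring
      _ = 2 * α * ((2/T) ^ (α - 1) * (T/2) ^ α) := by rw [← eq1]
      _ = 2 * α * ((2/T) ^ (α - 1) * ((T/2) ^ (α - 1) * (T/2))) := by rw [e4]
      _ = 2 * α * (((2/T) ^ (α - 1) * (T/2) ^ (α - 1)) * (T/2)) := by ring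
      _ = 2 * α * (1 * (T/2)) := by rw [e5]
      _ = T / 2 * (2 * α) := by ring
  have main := mul_le_mul_of_nonneg_left key hB.le
  rw [← mul_assoc, eq3] at main
  rw [mul_div_assoc'] at *
  rw [le_div_iff₀ (by positivity : (0:ℝ) < 2 * α)]
  calc T / 2 * Real.exp (2 * (T/2) ^ α) * (2 * α)
      = T / 2 * (2 * α) * Real.exp (2 * (T/2) ^ α) := by ring
    _ ≤ (2/T) ^ (α - 1) * Real.exp (2 * T ^ α) := main

/-- For every integer `N ≥ 3` and `α > 1`,
`(∫₀^T e^{N t^α} dt) / (∫₀^T e^{2 t^α} dt)^{N/2} → +∞` as `T → ∞`. -/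
theorem ratio_exp_rpow_tendsto_atTop (N : ℕ) (hN : 3 ≤ N) (α : ℝ) (hα : 1 < α) :
    Filter.Tendsto
      (fun T : ℝ =>
        (∫ t in Set.Icc (0:ℝ) T, Real.exp (N * t ^ α)) /
          (∫ t in Set.Icc (0:ℝ) T, Real.exp (2 * t ^ α)) ^ ((N : ℝ) / 2))
      Filter.atTop Filter.atTop := by
  have hα0 : (0:ℝ) < α := by linarith
  have hβ : (0:ℝ) < α - 1 := by linarith
  have hN3 : (3:ℝ) ≤ (N:ℝ) := by exact_mod_cast hN
  set q' : ℝ := (N:ℝ) / 2 with hq'def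
  have hq'1 : 1 < q' := by simp only [hq'def]; linarith
  set γ : ℝ := (α - 1) * (q' - 1) with hγdef
  have hγ : 0 < γ := mul_pos hβ (by linarith)
  have hKpos : (0:ℝ) < ((2:ℝ)^(α-1)/α) ^ q' :=
    Real.rpow_pos_of_pos (by positivity) _
  set cst : ℝ := ((2*(N:ℝ)*α) * ((2:ℝ)^(α-1)/α) ^ q')⁻¹ with hcstdef
  have hcst : 0 < cst := by
    apply inv_pos.2; apply mul_pos _ hKpos; positivity
  refine tendsto_atTop_mono' atTop ?_
    ((tendsto_rpow_atTop hγ).const_mul_atTop hcst)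
  filter_upwards [cmp_ev α hα, eventually_ge_atTop 1] with T hcmp hT1
  have hT0 : (0:ℝ) < T := by linarith
  have h0T : (0:ℝ) ≤ T := hT0.le
  rw [icc_eq T h0T, icc_eq T h0T]
  set I_N := ∫ t in (0:ℝ)..T, Real.exp ((N:ℝ) * t ^ α) with hINdef
  set I_2 := ∫ t in (0:ℝ)..T, Real.exp (2 * t ^ α) with hI2def
  have hI2pos : 0 < I_2 := by
    apply intervalIntegral.intervalIntegral_pos_of_pos_on
      ((contOn_exp 2 α hα0.le _).intervalIntegrable)
      (fun x _ => Real.exp_pos _) hT0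
  have hINnn : 0 ≤ I_N :=
    intervalIntegral.integral_nonneg h0T (fun t _ => (Real.exp_pos _).le)
  -- numerator lower bound
  have hTα1 : (1:ℝ) ≤ T ^ α := Real.one_le_rpow hT1 hα0.le
  have hexp2 : (2:ℝ) ≤ Real.exp ((N:ℝ) * T ^ α) := by
    have h1 : (1:ℝ) ≤ (N:ℝ) * T ^ α := by nlinarith
    linarith [Real.add_one_le_exp ((N:ℝ) * T ^ α)]
  have hTβpos : 0 < T ^ (α - 1) := Real.rpow_pos_of_pos hT0 _
  have hnum := num_lb (N:ℝ) α T (by linarith) hα h0T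
  have hnum' : Real.exp ((N:ℝ) * T ^ α) / (2 * ((N:ℝ) * α * T ^ (α-1))) ≤ I_N := by
    rw [div_le_iff₀ (by positivity)]
    nlinarith [hnum, hexp2, mul_nonneg hINnn (by positivity : (0:ℝ) ≤ (N:ℝ)*α*T^(α-1))]
  -- denominator upper bound
  have e6 : (2/T:ℝ) ^ (α-1) = 2 ^ (α-1) * T ^ (-(α-1)) := by
    rw [Real.div_rpow (by norm_num) h0T, Real.rpow_neg h0T, div_eq_mul_inv]
  have hden : I_2 ≤ (2:ℝ)^(α-1)/α * (T ^ (-(α-1)) * Real.exp (2 * T ^ α)) := by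
    calc I_2 ≤ T / 2 * Real.exp (2 * (T/2) ^ α)
          + (2/T) ^ (α-1) * (Real.exp (2 * T ^ α) / (2*α)) := den_ub α T hα hT0
      _ ≤ (2/T) ^ (α-1) * (Real.exp (2 * T ^ α) / (2*α))
          + (2/T) ^ (α-1) * (Real.exp (2 * T ^ α) / (2*α)) := by linarith
      _ = (2:ℝ)^(α-1)/α * (T ^ (-(α-1)) * Real.exp (2 * T ^ α)) := by
          rw [e6]; field_simp; ring
  set DU : ℝ := (2:ℝ)^(α-1)/α * (T ^ (-(α-1)) * Real.exp (2 * T ^ α)) with hDUdef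
  have hDUpos : 0 < DU := by
    have := Real.rpow_pos_of_pos hT0 (-(α-1))
    have := Real.exp_pos (2 * T ^ α)
    positivity
  have hDUpow : DU ^ q' = ((2:ℝ)^(α-1)/α) ^ q'
      * ((T ^ γ * T ^ (α-1))⁻¹ * Real.exp ((N:ℝ) * T ^ α)) := by
    rw [hDUdef, Real.mul_rpow (by positivity) (by positivity),
      Real.mul_rpow (Real.rpow_nonneg h0T _) (Real.exp_pos _).le]
    congr 1
    congr 1
    · rw [← Real.rpow_mul h0T, show (-(α-1)) * q' = -((α-1)*q') by ring,
        Real.rpow_neg h0T]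
      congr 1
      rw [← Real.rpow_add hT0]
      congr 1
      simp only [hγdef]; ring
    · rw [← Real.exp_mul]
      congr 1
      simp only [hq'def]; ring
  calc cst * T ^ γ
      = Real.exp ((N:ℝ) * T ^ α) / (2 * ((N:ℝ) * α * T ^ (α-1))) / DU ^ q' := by
        rw [hDUpow]
        have hE : Real.exp ((N:ℝ) * T ^ α) ≠ 0 := (Real.exp_pos _).ne'
        have hK : ((2:ℝ)^(α-1)/α) ^ q' ≠ 0 := hKpos.ne'
        have hTγ : T ^ γ ≠ 0 := (Real.rpow_pos_of_pos hT0 _).ne'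
        have hTβ : T ^ (α-1) ≠ 0 := hTβpos.ne'
        have hNα : ((N:ℝ) * α) ≠ 0 := by positivity
        rw [hcstdef]
        field_simp
    _ ≤ I_N / I_2 ^ q' :=
        div_le_div₀ hINnn hnum' (Real.rpow_pos_of_pos hI2pos _)
          (Real.rpow_le_rpow hI2pos.le hden (by positivity))
end
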